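/- arXiv:1701.00272 — 5 statements merged into one kernel-verified Lean document; each statement's English description precedes it below -/
import Mathlib

section
/- Let q be a power of an odd prime and let n ≥ 1 have 2-adic expansion n = 2^{r_1} + 2^{r_2} + ... + 2^{r_t} with 0 ≤ r_1 < r_2 < ... < r_t. If P is a Sylow 2-subgroup of GL_n(F_q) and, for each 1 ≤ i ≤ t, P_i is a Sylow 2-subgroup of GL_{2^{r_i}}(F_q), then P is isomorphic as a group to the direct product P_1 × P_2 × ... × P_t. -/
/-!
The `2`-part of `|GL_m(F_q)| = q^(m(m-1)/2) ∏_{j ≤ m} (q^j - 1)` is `∑_{j ≤ m} v₂(q^j - 1)`, and by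
lifting the exponent `v₂(q^j - 1)` depends only on `v₂(j)`. As `v₂(2^s + j) = v₂(j)` for
`0 < j < 2^s`, this `2`-adic valuation is additive along the `2`-adic expansion of `n`. So the
block-diagonal copy of `P₁ × ⋯ × P_t` in `GL_n(F_q)` has the order of a Sylow `2`-subgroup, and
Sylow subgroups are conjugate.
-/

open Finset Matrix

lemma padicValNat_two_pow_sub_one_of_odd {q j : ℕ} (hq : Odd q) (hj : Odd j) :
    padicValNat 2 (q ^ j - 1) = padicValNat 2 (q - 1) := by
  obtain rfl | hq1 : q = 1 ∨ 1 < q := by obtain ⟨k, rfl⟩ := hq; omega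
  · simp
  have hfactor : q ^ j - 1 = (q - 1) * ∑ i ∈ range j, q ^ i := by
    have : 1 ≤ q ^ j := Nat.one_le_pow _ _ (by omega)
    zify [hq1.le, this]
    exact (mul_geom_sum _ _).symm
  have hodd : Odd (∑ i ∈ range j, q ^ i) := by
    rwa [odd_sum_iff_odd_card_odd, filter_true_of_mem fun i _ => hq.pow, card_range]
  rw [hfactor, padicValNat.mul (by omega) hodd.pos.ne',
    padicValNat.eq_zero_of_not_dvd hodd.not_two_dvd_nat, add_zero]

lemma padicValNat_two_pow_sub_one_eq_of_padicValNat_eq {q j j' : ℕ} (hq : Odd q) (hq1 : 1 < q)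
    (hj : j ≠ 0) (hj' : j' ≠ 0) (hv : padicValNat 2 j = padicValNat 2 j') :
    padicValNat 2 (q ^ j - 1) = padicValNat 2 (q ^ j' - 1) := by
  have even_iff {i : ℕ} (hi : i ≠ 0) : Even i ↔ padicValNat 2 i ≠ 0 := by
    rw [even_iff_two_dvd, dvd_iff_padicValNat_ne_zero hi]
  rcases Nat.even_or_odd j with he | ho
  · have he' : Even j' := (even_iff hj').2 (hv ▸ (even_iff hj).1 he)
    have := padicValNat.pow_two_sub_one hq1 hq.not_two_dvd_nat hj he
    have := padicValNat.pow_two_sub_one hq1 hq.not_two_dvd_nat hj' he'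
    omega
  · have ho' : Odd j' := Nat.not_even_iff_odd.mp fun he' =>
      Nat.not_even_iff_odd.mpr ho ((even_iff hj).2 (hv ▸ (even_iff hj').1 he'))
    rw [padicValNat_two_pow_sub_one_of_odd hq ho, padicValNat_two_pow_sub_one_of_odd hq ho']

lemma padicValNat_pow_add_eq_of_lt {p s j : ℕ} [hp : Fact p.Prime] (hj0 : j ≠ 0) (hj : j < p ^ s) :
    padicValNat p (p ^ s + j) = padicValNat p j := by
  have hlt : padicValNat p j < s :=
    (Nat.pow_lt_pow_iff_right hp.out.one_lt).1
      ((Nat.le_of_dvd (Nat.pos_of_ne_zero hj0) pow_padicValNat_dvd).trans_lt hj)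
  have hdvd {k : ℕ} (hk : k ≤ s) : p ^ k ∣ p ^ s + j ↔ p ^ k ∣ j :=
    Nat.dvd_add_right (pow_dvd_pow p hk)
  apply le_antisymm
  · by_contra! h
    exact pow_succ_padicValNat_not_dvd hj0
      ((hdvd hlt).1 ((padicValNat_dvd_iff_le (by omega)).2 h))
  · exact (padicValNat_dvd_iff_le (by omega)).1 ((hdvd hlt.le).2 pow_padicValNat_dvd)

lemma apply_sum_two_pow_eq_sum_apply {f : ℕ → ℕ}
    (hf : ∀ s m, m < 2 ^ s → f (2 ^ s + m) = f (2 ^ s) + f m) (S : Finset ℕ) :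
    f (∑ k ∈ S, 2 ^ k) = ∑ k ∈ S, f (2 ^ k) := by
  induction S using Finset.induction_on_max with
  -- `hf 0 0` reads `f 1 = f 1 + f 0`
  | empty => simpa using hf 0 0 one_pos
  | insert a S hlt ih =>
    have ha : a ∉ S := fun h => lt_irrefl a (hlt a h)
    rw [sum_insert ha, sum_insert ha, hf _ _ (Nat.geomSum_lt le_rfl hlt), ih]

theorem factorization_card_GL_field {F : Type*} [Field F] [Fintype F] {p : ℕ} (hp : p.Prime)
    (hpq : ¬p ∣ Fintype.card F) (m : ℕ) :
    (Nat.card (GL (Fin m) F)).factorization p =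
      ∑ j ∈ range m, padicValNat p (Fintype.card F ^ (j + 1) - 1) := by
  have := Fact.mk hp
  set q := Fintype.card F
  have hq1 : 1 < q := Fintype.one_lt_card
  have hterm (i : Fin m) :
      (q ^ m - q ^ (i : ℕ)).factorization p = padicValNat p (q ^ (m - i) - 1) := by
    have hsplit : q ^ m - q ^ (i : ℕ) = q ^ (i : ℕ) * (q ^ (m - i) - 1) := by
      rw [Nat.mul_sub, mul_one, ← pow_add, Nat.add_sub_of_le i.isLt.le]
    have : 1 < q ^ (m - i) := Nat.one_lt_pow (by omega) hq1
    rw [Nat.factorization_def _ hp, hsplit, padicValNat.mul (by positivity) (by omega),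
      padicValNat.eq_zero_of_not_dvd fun h => hpq (hp.dvd_of_dvd_pow h), zero_add]
  have hne : ∀ i ∈ (univ : Finset (Fin m)), q ^ m - q ^ (i : ℕ) ≠ 0 := fun i _ =>
    Nat.sub_ne_zero_of_lt (Nat.pow_lt_pow_right hq1 i.isLt)
  rw [card_GL_field, Nat.factorization_prod hne, Finsupp.finsetSum_apply,
    sum_congr rfl fun i _ => hterm i,
    Fin.sum_univ_eq_sum_range (fun i => padicValNat p (q ^ (m - i) - 1)), ← sum_range_reflect]
  refine sum_congr rfl fun j hj => ?_
  rw [show m - (m - 1 - j) = j + 1 by grind]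

theorem factorization_two_card_GL_two_pow_add {F : Type*} [Field F] [Fintype F]
    (hq : Odd (Fintype.card F)) {s m : ℕ} (hm : m < 2 ^ s) :
    (Nat.card (GL (Fin (2 ^ s + m)) F)).factorization 2 =
      (Nat.card (GL (Fin (2 ^ s)) F)).factorization 2 +
        (Nat.card (GL (Fin m) F)).factorization 2 := by
  simp only [factorization_card_GL_field Nat.prime_two hq.not_two_dvd_nat, sum_range_add]
  congr 1
  refine sum_congr rfl fun j hj => ?_
  have := Fact.mk Nat.prime_two
  rw [add_assoc, padicValNat_two_pow_sub_one_eq_of_padicValNat_eq hq Fintype.one_lt_card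
    (by positivity) j.succ_ne_zero (padicValNat_pow_add_eq_of_lt j.succ_ne_zero (by grind))]

section BlockDiagonal

variable {ι : Type*} [Fintype ι] [DecidableEq ι] {κ : ι → Type*} [∀ i, Fintype (κ i)]
  [∀ i, DecidableEq (κ i)] {R : Type*} [Semiring R]

def Matrix.GeneralLinearGroup.blockDiagonal' : (∀ i, GL (κ i) R) →* GL ((i : ι) × κ i) R :=
  (Units.map (blockDiagonal'RingHom κ R).toMonoidHom).comp MulEquiv.piUnits.symm.toMonoidHom

theorem Matrix.GeneralLinearGroup.blockDiagonal'_injective :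
    Function.Injective (GeneralLinearGroup.blockDiagonal' : (∀ i, GL (κ i) R) →* _) :=
  fun _ _ h => MulEquiv.piUnits.symm.injective
    (Units.map_injective Matrix.blockDiagonal'_injective h)

end BlockDiagonal

theorem Sylow.nonempty_mulEquiv_pi_of_injective {p : ℕ} [Fact p.Prime] {ι : Type*} [Fintype ι]
    {G : ι → Type*} [∀ i, Group (G i)] [∀ i, Finite (G i)] {H : Type*} [Group H] [Finite H]
    (φ : (∀ i, G i) →* H) (hφ : Function.Injective φ)
    (hcard : (Nat.card H).factorization p = ∑ i, (Nat.card (G i)).factorization p)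
    (P : Sylow p H) (Ps : ∀ i, Sylow p (G i)) : Nonempty (P ≃* ∀ i, Ps i) := by
  let ψ : (∀ i, Ps i) →* H := φ.comp (MonoidHom.piMap fun i => (Ps i : Subgroup (G i)).subtype)
  have hψ : Function.Injective ψ :=
    hφ.comp (Function.Injective.piMap fun i => Subtype.val_injective)
  have hcardψ : Nat.card ψ.range = p ^ (Nat.card H).factorization p := by
    rw [← Nat.card_congr (MonoidHom.ofInjective hψ).toEquiv, Nat.card_pi, hcard,
      ← prod_pow_eq_pow_sum]
    exact prod_congr rfl fun i _ => (Ps i).card_eq_multiplicity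
  exact ⟨(P.equiv (Sylow.ofCard ψ.range hcardψ)).trans (MonoidHom.ofInjective hψ).symm⟩

theorem sylow_two_GL_iso_prod_of_two_adic_expansion_general
    {F : Type} [Field F] [Fintype F]
    (hq : ∃ p k : ℕ, p.Prime ∧ Odd p ∧ 0 < k ∧ Fintype.card F = p ^ k)
    {n t : ℕ} (r : Fin t → ℕ) (hr : StrictMono r)
    (hexp : n = ∑ i : Fin t, 2 ^ (r i))
    (P : Sylow 2 (Matrix.GeneralLinearGroup (Fin n) F))
    (Ps : (i : Fin t) → Sylow 2 (Matrix.GeneralLinearGroup (Fin (2 ^ (r i))) F)) :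
    Nonempty ((P : Subgroup (Matrix.GeneralLinearGroup (Fin n) F)) ≃*
      ((i : Fin t) → (Ps i : Subgroup (Matrix.GeneralLinearGroup (Fin (2 ^ (r i))) F)))) := by
  obtain ⟨p, k, -, hp, -, hcard⟩ := hq
  have hodd : Odd (Fintype.card F) := hcard ▸ hp.pow
  let e : ((i : Fin t) × Fin (2 ^ r i)) ≃ Fin n := Fintype.equivFinOfCardEq (by simp [hexp])
  let reindexGL := Units.mapEquiv (reindexAlgEquiv F F e).toMulEquiv
  refine Sylow.nonempty_mulEquiv_pi_of_injective
    (reindexGL.toMonoidHom.comp GeneralLinearGroup.blockDiagonal')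
    (reindexGL.injective.comp GeneralLinearGroup.blockDiagonal'_injective) ?_ P Ps
  obtain rfl : n = ∑ k ∈ univ.map ⟨r, hr.injective⟩, 2 ^ k := by simpa using hexp
  simpa using apply_sum_two_pow_eq_sum_apply (f := fun m => (Nat.card (GL (Fin m) F)).factorization 2)
    (fun s m => factorization_two_card_GL_two_pow_add hodd) (univ.map ⟨r, hr.injective⟩)

/-- Let `q` be a power of an odd prime and let `n ≥ 1` have 2-adic expansion
`n = 2^(r 1) + ⋯ + 2^(r t)` with strictly increasing exponents. If `P` is a Sylow 2-subgroup of
`GL n (F_q)` and each `Ps i` is a Sylow 2-subgroup of `GL (2^(r i)) (F_q)`, then `P` is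
isomorphic as a group to the direct product of the `Ps i`. -/
theorem sylow_two_GL_iso_prod_of_two_adic_expansion
    {F : Type} [Field F] [Fintype F]
    (hq : ∃ p k : ℕ, p.Prime ∧ Odd p ∧ 0 < k ∧ Fintype.card F = p ^ k)
    {n t : ℕ} (hn : 1 ≤ n) (r : Fin t → ℕ) (hr : StrictMono r)
    (hexp : n = ∑ i : Fin t, 2 ^ (r i))
    (P : Sylow 2 (Matrix.GeneralLinearGroup (Fin n) F))
    (Ps : (i : Fin t) → Sylow 2 (Matrix.GeneralLinearGroup (Fin (2 ^ (r i))) F)) :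
    Nonempty ((P : Subgroup (Matrix.GeneralLinearGroup (Fin n) F)) ≃*
      ((i : Fin t) → (Ps i : Subgroup (Matrix.GeneralLinearGroup (Fin (2 ^ (r i))) F)))) :=
  sylow_two_GL_iso_prod_of_two_adic_expansion_general hq r hr hexp P Ps
end

section
/- Let N be a normal subgroup of a finite group G, let χ̃ be an irreducible complex character of G, and let χ be an irreducible constituent of the restriction of χ̃ to N. Suppose g ∈ N is an element whose N-conjugacy class is invariant under conjugation by G, i.e., for every x ∈ G there is h ∈ N with x g x⁻¹ = h g h⁻¹. Then χ(g)·χ̃(1) = χ̃(g)·χ(1). -/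
/-- A representation is irreducible if the space is nontrivial and the only invariant
submodules are `⊥` and `⊤`. -/
def IsIrreducibleRep {G V : Type} [Group G] [AddCommGroup V] [Module ℂ V]
    (ρ : Representation ℂ G V) : Prop :=
  Nontrivial V ∧ ∀ W : Submodule ℂ V, (∀ g : G, ∀ v ∈ W, ρ g v ∈ W) → W = ⊥ ∨ W = ⊤

/-- The character of a complex representation: the trace function. -/
noncomputable def repChar {G V : Type} [Group G] [AddCommGroup V] [Module ℂ V]
    (ρ : Representation ℂ G V) (g : G) : ℂ :=
  LinearMap.trace ℂ V (ρ g)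

section ConjTrace

open Matrix
open scoped ComplexOrder

/-- For a matrix representation of a finite group, the trace of `R g⁻¹` is the complex
conjugate of the trace of `R g`. -/
lemma trace_inv_eq_star_trace {H : Type*} [Group H] [Fintype H]
    {m : Type*} [Fintype m] [DecidableEq m]
    (R : H →* Matrix m m ℂ) (g : H) :
    (R g⁻¹).trace = (starRingEnd ℂ) ((R g).trace) := by
  classical
  set P : Matrix m m ℂ := ∑ h : H, (R h)ᴴ * (R h) with hPdef
  have hPsplit : P = (R 1)ᴴ * R 1 + ∑ h ∈ Finset.univ.erase 1, (R h)ᴴ * R h := by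
    rw [hPdef, ← Finset.add_sum_erase _ _ (Finset.mem_univ 1)]
  have hP : P.PosDef := by
    rw [hPsplit, _root_.map_one, Matrix.conjTranspose_one, one_mul]
    refine Matrix.PosDef.add_posSemidef Matrix.PosDef.one ?_
    exact Finset.sum_induction _ _ (fun a b ha hb => ha.add hb) Matrix.PosSemidef.zero
      (fun x _ => Matrix.posSemidef_conjTranspose_mul_self _)
  have hdet : IsUnit P.det := (Matrix.isUnit_iff_isUnit_det P).mp hP.isUnit
  have hPP : P * P⁻¹ = 1 := Matrix.mul_nonsing_inv P hdet
  have hPP' : P⁻¹ * P = 1 := Matrix.nonsing_inv_mul P hdet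
  have hfix : (R g)ᴴ * P * R g = P := by
    calc (R g)ᴴ * P * R g = ∑ h : H, (R (h * g))ᴴ * R (h * g) := by
          rw [hPdef, Finset.mul_sum, Finset.sum_mul]
          exact Finset.sum_congr rfl fun h _ => by
            rw [_root_.map_mul, Matrix.conjTranspose_mul]; noncomm_ring
      _ = P := Fintype.sum_equiv (Equiv.mulRight g) _ _ (fun h => rfl)
  have hRinv : R g * R g⁻¹ = 1 := by rw [← _root_.map_mul, mul_inv_cancel, _root_.map_one]
  have hinvR : R g⁻¹ = P⁻¹ * ((R g)ᴴ * P) := by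
    calc R g⁻¹ = P⁻¹ * P * R g⁻¹ := by rw [hPP', one_mul]
      _ = P⁻¹ * ((R g)ᴴ * P * R g) * R g⁻¹ := by rw [hfix]
      _ = P⁻¹ * ((R g)ᴴ * P) * (R g * R g⁻¹) := by noncomm_ring
      _ = P⁻¹ * ((R g)ᴴ * P) := by rw [hRinv, mul_one]
  rw [hinvR, Matrix.trace_mul_comm, Matrix.mul_assoc, hPP, Matrix.mul_one,
    Matrix.trace_conjTranspose]
  rfl

end ConjTrace

/-- Schur's lemma: an endomorphism commuting with an irreducible representation is scalar. -/
lemma schur_scalar {G V : Type} [Group G] [AddCommGroup V] [Module ℂ V]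
    [FiniteDimensional ℂ V] (ρ : Representation ℂ G V) (hirr : IsIrreducibleRep ρ)
    (f : V →ₗ[ℂ] V) (hf : ∀ x : G, (ρ x) * f = f * (ρ x)) :
    ∃ c : ℂ, f = c • LinearMap.id := by
  obtain ⟨hnt, hsub⟩ := hirr
  haveI := hnt
  obtain ⟨c, hc⟩ := Module.End.exists_eigenvalue (f : Module.End ℂ V)
  refine ⟨c, ?_⟩
  have hinv : ∀ x : G, ∀ v ∈ Module.End.eigenspace f c, ρ x v ∈ Module.End.eigenspace f c := by
    intro x v hv
    rw [Module.End.mem_eigenspace_iff] at hv ⊢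
    have hcomm : f (ρ x v) = ρ x (f v) := by
      have h1 := hf x
      calc f (ρ x v) = (f * ρ x) v := rfl
        _ = (ρ x * f) v := by rw [h1]
        _ = ρ x (f v) := rfl
    rw [hcomm, hv, map_smul]
  rcases hsub _ hinv with h | h
  · exact absurd h hc
  · ext v
    have hv : v ∈ Module.End.eigenspace f c := h ▸ Submodule.mem_top
    simpa using Module.End.mem_eigenspace_iff.mp hv

/-- Let `N ⊴ G` be finite groups, `χ̃` an irreducible complex character of
`G`, and `χ` an irreducible constituent of the restriction of `χ̃` to `N`. If `g ∈ N` has its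
`N`-conjugacy class invariant under conjugation by `G`, then `χ(g)·χ̃(1) = χ̃(g)·χ(1)`. -/
theorem constituent_value_of_class_invariant
    {G : Type} [Group G] [Finite G] (N : Subgroup G) (hN : N.Normal)
    {V : Type} [AddCommGroup V] [Module ℂ V] [FiniteDimensional ℂ V]
    (ρG : Representation ℂ G V) (hirrG : IsIrreducibleRep ρG)
    {W : Type} [AddCommGroup W] [Module ℂ W] [FiniteDimensional ℂ W]
    (ρN : Representation ℂ N W) (hirrN : IsIrreducibleRep ρN)
    (hconst : ∑ᶠ h : N, repChar ρG (h : G) * (starRingEnd ℂ) (repChar ρN h) ≠ 0)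
    (g : G) (hg : g ∈ N)
    (hclass : ∀ x : G, ∃ h ∈ N, x * g * x⁻¹ = h * g * h⁻¹) :
    repChar ρN ⟨g, hg⟩ * repChar ρG 1 = repChar ρG g * repChar ρN 1 := by
  classical
  haveI : Fintype N := Fintype.ofFinite N
  set g' : N := (⟨g, hg⟩ : N) with hg'def
  set bV := Module.finBasis ℂ V with hbV
  set bW := Module.finBasis ℂ W with hbW
  set M : G →* Matrix (Fin (Module.finrank ℂ V)) (Fin (Module.finrank ℂ V)) ℂ :=
    { toFun := fun x => LinearMap.toMatrix bV bV (ρG x)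
      map_one' := by
        show LinearMap.toMatrix bV bV (ρG 1) = 1
        rw [map_one ρG]; exact LinearMap.toMatrix_one bV
      map_mul' := fun a b => by
        show LinearMap.toMatrix bV bV (ρG (a * b))
            = LinearMap.toMatrix bV bV (ρG a) * LinearMap.toMatrix bV bV (ρG b)
        rw [map_mul ρG]; exact LinearMap.toMatrix_mul bV _ _ } with hMdef
  set R : N →* Matrix (Fin (Module.finrank ℂ W)) (Fin (Module.finrank ℂ W)) ℂ :=
    { toFun := fun x => LinearMap.toMatrix bW bW (ρN x)
      map_one' := by
        show LinearMap.toMatrix bW bW (ρN 1) = 1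
        rw [map_one ρN]; exact LinearMap.toMatrix_one bW
      map_mul' := fun a b => by
        show LinearMap.toMatrix bW bW (ρN (a * b))
            = LinearMap.toMatrix bW bW (ρN a) * LinearMap.toMatrix bW bW (ρN b)
        rw [map_mul ρN]; exact LinearMap.toMatrix_mul bW _ _ } with hRdef
  have hcharG : ∀ x : G, repChar ρG x = (M x).trace := fun x =>
    LinearMap.trace_eq_matrix_trace ℂ bV _
  have hcharN : ∀ x : N, repChar ρN x = (R x).trace := fun x =>
    LinearMap.trace_eq_matrix_trace ℂ bW _
  have hconj : ∀ h : N, repChar ρN h⁻¹ = (starRingEnd ℂ) (repChar ρN h) := fun h => by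
    rw [hcharN, hcharN]; exact trace_inv_eq_star_trace R h
  have hS0 : ∑ h : N, repChar ρG (h : G) * repChar ρN h⁻¹ ≠ 0 := by
    rw [finsum_eq_sum_of_fintype] at hconst
    simpa only [hconj] using hconst
  -- existence of a nonzero intertwiner
  have hexist : ∃ φ : W →ₗ[ℂ] V, φ ≠ 0 ∧ ∀ (n : N) (w : W), φ (ρN n w) = ρG (n : G) (φ w) := by
    by_contra hno
    push_neg at hno
    have hall : ∀ φ : W →ₗ[ℂ] V, (∀ (n : N) (w : W), φ (ρN n w) = ρG (n : G) (φ w)) → φ = 0 := by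
      intro φ hφ
      by_contra h0
      obtain ⟨n, w, hnw⟩ := hno φ h0
      exact hnw (hφ n w)
    have hAzero : ∀ f : W →ₗ[ℂ] V,
        (∑ h : N, (ρG (h : G)) ∘ₗ (f ∘ₗ (ρN h⁻¹))) = 0 := by
      intro f
      apply hall
      intro n w
      rw [LinearMap.sum_apply, LinearMap.sum_apply, map_sum]
      refine Fintype.sum_equiv (Equiv.mulLeft n).symm _ _ (fun x => ?_)
      simp only [Equiv.mulLeft_symm, Equiv.coe_mulLeft, LinearMap.comp_apply]
      have e2 : ρN x⁻¹ (ρN n w) = ρN ((n⁻¹ * x)⁻¹) w := by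
        rw [mul_inv_rev, inv_inv, map_mul ρN, Module.End.mul_apply]
      rw [e2, ← Module.End.mul_apply (ρG (n : G)), ← map_mul ρG]
      congr 2
      norm_cast
      group
    have hstd : ∀ (A : Matrix (Fin (Module.finrank ℂ V)) (Fin (Module.finrank ℂ V)) ℂ)
        (B : Matrix (Fin (Module.finrank ℂ W)) (Fin (Module.finrank ℂ W)) ℂ)
        (i j : Fin (Module.finrank ℂ V)) (k l : Fin (Module.finrank ℂ W)),
        (A * (Matrix.single j k (1:ℂ)) * B) i l = A i j * B k l := by
      intro A B i j k l
      rw [Matrix.mul_assoc, Matrix.mul_apply]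
      rw [Finset.sum_eq_single j]
      · congr 1
        simp [Matrix.mul_apply, Matrix.single, ite_and]
      · intro b _ hb
        simp [Matrix.mul_apply, Matrix.single, ite_and, Ne.symm hb]
      · intro hj; exact absurd (Finset.mem_univ j) hj
    have hmat : ∀ F : Matrix (Fin (Module.finrank ℂ V)) (Fin (Module.finrank ℂ W)) ℂ,
        ∑ h : N, M (h : G) * F * R h⁻¹ = 0 := by
      intro F
      have h0 := hAzero ((LinearMap.toMatrix bW bV).symm F)
      have h1 := congrArg (LinearMap.toMatrix bW bV) h0
      rw [map_sum, map_zero] at h1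
      rw [← h1]
      refine Finset.sum_congr rfl fun h _ => ?_
      rw [LinearMap.toMatrix_comp bW bV bV, LinearMap.toMatrix_comp bW bW bV,
        LinearEquiv.apply_symm_apply, Matrix.mul_assoc]
      rfl
    have hentry : ∀ (i j : Fin (Module.finrank ℂ V)) (k l : Fin (Module.finrank ℂ W)),
        ∑ h : N, (M (h : G)) i j * (R h⁻¹) k l = 0 := by
      intro i j k l
      have h1 : (∑ h : N, M (h : G) * Matrix.single j k (1:ℂ) * R h⁻¹) i l
          = (0 : ℂ) := by
        rw [hmat (Matrix.single j k (1:ℂ))]; rfl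
      rw [Matrix.sum_apply] at h1
      rw [← h1]
      exact Finset.sum_congr rfl fun h _ => (hstd _ _ i j k l).symm
    apply hS0
    calc ∑ h : N, repChar ρG (h : G) * repChar ρN h⁻¹
        = ∑ h : N, ∑ i, ∑ k, (M (h : G)) i i * (R h⁻¹) k k := by
          refine Finset.sum_congr rfl fun h _ => ?_
          rw [hcharG, hcharN, Matrix.trace, Matrix.trace, Finset.sum_mul_sum]
          rfl
      _ = ∑ i, ∑ k, ∑ h : N, (M (h : G)) i i * (R h⁻¹) k k := by
          rw [Finset.sum_comm]
          exact Finset.sum_congr rfl fun i _ => Finset.sum_comm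
      _ = 0 := by
          refine Finset.sum_eq_zero fun i _ => Finset.sum_eq_zero fun k _ => hentry i i k k
  obtain ⟨φ, hφ0, hφ⟩ := hexist
  set S : V →ₗ[ℂ] V := ∑ h : N, ρG ((h : G) * g * (h : G)⁻¹) with hSdef
  set T : W →ₗ[ℂ] W := ∑ h : N, ρN (h * g' * h⁻¹) with hTdef
  obtain ⟨μ, hμ⟩ := schur_scalar ρG hirrG S (by
    intro x
    obtain ⟨k, hk, hkeq⟩ := hclass x
    rw [hSdef, Finset.mul_sum, Finset.sum_mul]
    refine Fintype.sum_equiv ((MulAut.conjNormal x).toEquiv.trans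
      (Equiv.mulRight (⟨k, hk⟩ : N))) _ _ (fun h => ?_)
    rw [← map_mul ρG, ← map_mul ρG]
    congr 1
    have he : ((((MulAut.conjNormal x).toEquiv.trans (Equiv.mulRight (⟨k, hk⟩ : N))) h : G))
        = x * (h : G) * x⁻¹ * k := by
      simp [Equiv.trans_apply]
    rw [he]
    have h2 : x * (h : G) * x⁻¹ * k * g * (x * (h : G) * x⁻¹ * k)⁻¹ * x
        = (x * (h : G) * x⁻¹) * (k * g * k⁻¹) * (x * (h : G)⁻¹ * x⁻¹) * x := by group
    rw [h2, ← hkeq]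
    group)
  obtain ⟨lam, hlam⟩ := schur_scalar ρN hirrN T (by
    intro n
    rw [hTdef, Finset.mul_sum, Finset.sum_mul]
    refine Fintype.sum_equiv (Equiv.mulLeft n) _ _ (fun h => ?_)
    rw [← map_mul ρN, ← map_mul ρN]
    congr 1
    simp only [Equiv.coe_mulLeft]
    group)
  have hφST : ∀ w : W, φ (T w) = S (φ w) := by
    intro w
    rw [hTdef, hSdef, LinearMap.sum_apply, map_sum, LinearMap.sum_apply]
    refine Finset.sum_congr rfl fun h _ => ?_
    have hcoe : ((h * g' * h⁻¹ : N) : G) = (h : G) * g * (h : G)⁻¹ := by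
      rw [hg'def]
      push_cast
      rfl
    rw [hφ (h * g' * h⁻¹) w, hcoe]
  have hlm : lam = μ := by
    obtain ⟨w, hw⟩ : ∃ w, φ w ≠ 0 := by
      by_contra h
      push_neg at h
      exact hφ0 (LinearMap.ext fun w => by simp [h w])
    have h1 := hφST w
    rw [hlam, hμ] at h1
    simp only [LinearMap.smul_apply, LinearMap.id_apply, map_smul] at h1
    have h2 : (lam - μ) • φ w = 0 := by rw [sub_smul, h1, sub_self]
    rcases smul_eq_zero.mp h2 with h | h
    · exact sub_eq_zero.mp h
    · exact absurd h hw
  have htrG : ∀ h : N, LinearMap.trace ℂ V (ρG ((h : G) * g * (h : G)⁻¹)) = repChar ρG g := by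
    intro h
    rw [map_mul ρG, map_mul ρG, LinearMap.trace_mul_comm, ← mul_assoc, ← map_mul ρG,
      inv_mul_cancel, map_one ρG, one_mul]
    rfl
  have htrN : ∀ h : N, LinearMap.trace ℂ W (ρN (h * g' * h⁻¹)) = repChar ρN g' := by
    intro h
    rw [map_mul ρN, map_mul ρN, LinearMap.trace_mul_comm, ← mul_assoc, ← map_mul ρN,
      inv_mul_cancel, map_one ρN, one_mul]
    rfl
  have hid_G : LinearMap.trace ℂ V LinearMap.id = repChar ρG 1 := by
    rw [repChar, map_one ρG, Module.End.one_eq_id]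
  have hid_N : LinearMap.trace ℂ W LinearMap.id = repChar ρN 1 := by
    rw [repChar, map_one ρN, Module.End.one_eq_id]
  have e1 : μ * repChar ρG 1 = (Fintype.card N : ℂ) * repChar ρG g := by
    have hh : LinearMap.trace ℂ V S = (Fintype.card N : ℂ) * repChar ρG g := by
      rw [hSdef, map_sum, Finset.sum_congr rfl (fun h _ => htrG h), Finset.sum_const,
        Finset.card_univ, nsmul_eq_mul]
    rw [← hh, hμ, map_smul, smul_eq_mul, hid_G]
  have e2 : lam * repChar ρN 1 = (Fintype.card N : ℂ) * repChar ρN g' := by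
    have hh : LinearMap.trace ℂ W T = (Fintype.card N : ℂ) * repChar ρN g' := by
      rw [hTdef, map_sum, Finset.sum_congr rfl (fun h _ => htrN h), Finset.sum_const,
        Finset.card_univ, nsmul_eq_mul]
    rw [← hh, hlam, map_smul, smul_eq_mul, hid_N]
  have hcard : (Fintype.card N : ℂ) ≠ 0 := Nat.cast_ne_zero.mpr Fintype.card_ne_zero
  refine mul_left_cancel₀ hcard ?_
  calc (Fintype.card N : ℂ) * (repChar ρN g' * repChar ρG 1)
      = (lam * repChar ρN 1) * repChar ρG 1 := by rw [e2]; ring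
    _ = (μ * repChar ρG 1) * repChar ρN 1 := by rw [hlm]; ring
    _ = ((Fintype.card N : ℂ) * repChar ρG g) * repChar ρN 1 := by rw [e1]
    _ = (Fintype.card N : ℂ) * (repChar ρG g * repChar ρN 1) := by ring
end

section
/- Let q be a power of an odd prime and let u ∈ SL_4(F_q) be a non-regular unipotent element, i.e., a matrix satisfying (u − I)³ = 0 (where I is the 4×4 identity matrix). Then there exists g ∈ SL_4(F_q) with g u g⁻¹ = u². -/
/-!
Write `u = 1 + y` with `y³ = 0` and let `z = y - y²/2`, a truncated logarithm of `u`: then `z³ = 0`,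
`u = 1 + z + z²/2` and `u² = 1 + 2z + (2z)²/2`, so any `g` with `g z g⁻¹ = 2z` conjugates `u` to
`u²`. In a basis made of Jordan chains of `z`, a diagonal `g` whose entries are multiplied by `2`
along each chain does this. Such a `g` can be given determinant `1` because `z` is not regular:
the chains of the Jordan types `2 1 1`, `2 2` and `3 1` can be scaled independently, whereas for a
single chain of length `4` the determinant is `2⁶` times a fourth power.
-/

open Module LinearMap

section LinearAlgebra

variable {F V : Type*} [Field F] [AddCommGroup V] [Module F V]

theorem LinearIndependent.sumElim_of_mem_ker {W ι κ : Type*} [AddCommGroup W] [Module F W]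
    {f : V →ₗ[F] W} {y : κ → V} {x : ι → V} (hy : LinearIndependent F y)
    (hyf : ∀ k, f (y k) = 0) (hx : LinearIndependent F (f ∘ x)) :
    LinearIndependent F (Sum.elim y x) :=
  LinearIndependent.sumElim_of_quotient (M' := ker f) (f := fun k => ⟨y k, hyf k⟩)
    (.of_comp (ker f).subtype hy) x (hx.of_comp ((ker f).liftQ f le_rfl))

variable [FiniteDimensional F V]

theorem Submodule.finrank_le_finrank_map_add_finrank_ker {W : Type*} [AddCommGroup W]
    [Module F W] (f : V →ₗ[F] W) (p : Submodule F V) :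
    finrank F p ≤ finrank F (p.map f) + finrank F (ker f) := by
  have h := (f.domRestrict p).finrank_range_add_finrank_ker
  rw [range_domRestrict, ker_domRestrict] at h
  have hker : finrank F ((ker f).comap p.subtype) ≤ finrank F (ker f) := by
    rw [(Submodule.equivMapOfInjective _ p.injective_subtype _).finrank_eq]
    exact Submodule.finrank_mono (Submodule.map_comap_le _ _)
  omega

theorem Module.End.finrank_le_mul_finrank_ker_of_pow_eq_zero {f : Module.End F V} {k : ℕ}
    (hf : f ^ k = 0) :
    finrank F V ≤ k * finrank F (ker f) := by
  have hrange : ∀ n, finrank F V ≤ finrank F (range (f ^ n)) + n * finrank F (ker f) := by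
    intro n
    induction n with
    | zero => rw [pow_zero, Module.End.one_eq_id, range_id, finrank_top]; omega
    | succ n ih =>
      have := Submodule.finrank_le_finrank_map_add_finrank_ker f (range (f ^ n))
      rw [← range_comp, ← Module.End.mul_eq_comp, ← pow_succ'] at this
      linarith
  have := hrange k
  rwa [hf, range_zero, finrank_bot, zero_add] at this

theorem LinearMap.exists_linearIndependent_comp_of_finrank_range_eq {W : Type*}
    [AddCommGroup W] [Module F W] {f : V →ₗ[F] W} {n : ℕ} (hn : finrank F (range f) = n) :
    ∃ x : Fin n → V, LinearIndependent F (f ∘ x) := by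
  let B := finBasisOfFinrankEq F (range f) hn
  choose x hx using fun i => (B i).2
  refine ⟨x, ?_⟩
  rw [show f ∘ x = (range f).subtype ∘ B from funext hx]
  exact B.linearIndependent.map' _ (range f).ker_subtype

theorem Module.End.exists_det_eq_one_mul_eq_smul_mul_of_linearIndependent {ι : Type*}
    [Fintype ι] {v : ι → V} (hv : LinearIndependent F v) (hcard : Fintype.card ι = finrank F V)
    {f : Module.End F V} {c : F} (d : ι → F) (hd : ∏ i, d i = 1)
    (hfd : ∀ i, f (v i) = 0 ∨ ∃ j, f (v i) = v j ∧ d j = c * d i) :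
    ∃ e : Module.End F V, LinearMap.det e = 1 ∧ e * f = c • (f * e) := by
  classical
  let b := basisOfLinearIndependentOfCardEqFinrank' v hv hcard
  let e := Matrix.toLin b b (Matrix.diagonal d)
  have he : ∀ i, e (v i) = d i • v i := fun i => by
    simpa [b, Matrix.diagonal_apply] using Matrix.toLin_self b b (Matrix.diagonal d) i
  refine ⟨e, by rw [LinearMap.det_toLin, Matrix.det_diagonal, hd], b.ext fun i => ?_⟩
  rcases hfd i with h | ⟨j, h, hj⟩
  · simp [b, he, h]
  · simp [b, he, h, hj, smul_smul]

theorem Module.End.exists_det_eq_one_mul_eq_smul_mul_of_finrank_range_eq_two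
    (hV : finrank F V = 4) {f : Module.End F V} (hf : ∀ v, f (f v) = 0)
    (hr : finrank F (range f) = 2) {c : F} (hc : c ≠ 0) :
    ∃ e : Module.End F V, LinearMap.det e = 1 ∧ e * f = c • (f * e) := by
  obtain ⟨x, hx⟩ := exists_linearIndependent_comp_of_finrank_range_eq hr
  refine exists_det_eq_one_mul_eq_smul_mul_of_linearIndependent
    (hx.sumElim_of_mem_ker (fun i => hf (x i)) hx) (by simp [hV])
    (Sum.elim ![c, 1] ![1, c⁻¹]) (by simp [Fin.prod_univ_two, hc]) ?_
  rintro (i | i)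
  · exact .inl (hf (x i))
  · refine .inr ⟨.inl i, rfl, ?_⟩
    fin_cases i <;> simp [hc]

theorem Module.End.exists_det_eq_one_mul_eq_smul_mul_of_finrank_range_eq_one
    (hV : finrank F V = 4) {f : Module.End F V} (hf : ∀ v, f (f v) = 0)
    (hr : finrank F (range f) = 1) {c : F} (hc : c ≠ 0) :
    ∃ e : Module.End F V, LinearMap.det e = 1 ∧ e * f = c • (f * e) := by
  obtain ⟨x, hx⟩ := exists_linearIndependent_comp_of_finrank_range_eq hr
  have hker : finrank F (ker f) = 3 := by
    have := finrank_range_add_finrank_ker f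
    omega
  let k : ker f := ⟨f (x 0), hf (x 0)⟩
  have hk : k ≠ 0 := fun h => hx.ne_zero 0 (congrArg Subtype.val h)
  obtain ⟨y, hy⟩ := exists_linearIndependent_pair_of_one_lt_finrank
    (show 1 < finrank F (ker f) by omega) hk
  obtain ⟨z, hz⟩ := exists_linearIndependent_cons_of_lt_finrank hy
    (show 2 < finrank F (ker f) by omega)
  refine exists_det_eq_one_mul_eq_smul_mul_of_linearIndependent
    ((hz.map' _ (ker f).ker_subtype).sumElim_of_mem_ker (fun i => (![z, k, y] i).2) hx)
    (by simp [hV]) (Sum.elim ![c⁻¹, c, 1] ![1]) (by simp [Fin.prod_univ_three, hc]) ?_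
  rintro (i | i)
  · exact .inl (![z, k, y] i).2
  · refine .inr ⟨.inl 1, ?_, ?_⟩
    · fin_cases i; rfl
    · fin_cases i; simp

theorem Module.End.exists_det_eq_one_mul_eq_smul_mul_of_apply_apply_ne_zero
    (hV : finrank F V = 4) {f : Module.End F V} (hf : f ^ 3 = 0) {v : V} (hv : f (f v) ≠ 0)
    {c : F} (hc : c ≠ 0) :
    ∃ e : Module.End F V, LinearMap.det e = 1 ∧ e * f = c • (f * e) := by
  have hf3 : ∀ v, f (f (f v)) = 0 := fun v => by
    simpa [pow_succ, Module.End.mul_apply] using congrArg (· v) hf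
  have hker : 1 < finrank F (ker f) := by
    have := Module.End.finrank_le_mul_finrank_ker_of_pow_eq_zero hf
    omega
  let k : ker f := ⟨f (f v), hf3 v⟩
  have hk : k ≠ 0 := fun h => hv (congrArg Subtype.val h)
  obtain ⟨w, hw⟩ := exists_linearIndependent_pair_of_one_lt_finrank hker hk
  have hchain : LinearIndependent F ![f (f v), f v] := by
    refine LinearIndependent.pair_iff.mpr fun s t hst => ?_
    have ht : t • f (f v) = 0 := by simpa [hf3] using congrArg f hst
    obtain rfl : t = 0 := (smul_eq_zero.mp ht).resolve_right hv
    exact ⟨(smul_eq_zero.mp (by simpa using hst)).resolve_right hv, rfl⟩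
  refine exists_det_eq_one_mul_eq_smul_mul_of_linearIndependent
    ((hw.map' _ (ker f).ker_subtype).sumElim_of_mem_ker (fun i => (![k, w] i).2)
      (by rw [← FinVec.map_eq (⇑f) ![f v, v]]; exact hchain))
    (by simp [hV]) (Sum.elim ![c, 1] ![1, c⁻¹]) (by simp [Fin.prod_univ_two, hc]) ?_
  rintro (i | i)
  · exact .inl (![k, w] i).2
  · fin_cases i
    · exact .inr ⟨.inl 0, rfl, by simp⟩
    · exact .inr ⟨.inr 0, rfl, by simp [hc]⟩

theorem Module.End.exists_det_eq_one_mul_eq_smul_mul_of_pow_three_eq_zero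
    (hV : finrank F V = 4) {f : Module.End F V} (hf : f ^ 3 = 0) {c : F} (hc : c ≠ 0) :
    ∃ e : Module.End F V, LinearMap.det e = 1 ∧ e * f = c • (f * e) := by
  by_cases hsq : ∃ v, f (f v) ≠ 0
  · obtain ⟨v, hv⟩ := hsq
    exact exists_det_eq_one_mul_eq_smul_mul_of_apply_apply_ne_zero hV hf hv hc
  push Not at hsq
  have hrange : finrank F (range f) ≤ finrank F (ker f) :=
    Submodule.finrank_mono fun _ ⟨v, hv⟩ => hv ▸ hsq v
  have : finrank F (range f) ≤ 2 := by
    have := finrank_range_add_finrank_ker f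
    omega
  interval_cases hr : finrank F (range f)
  · obtain rfl : f = 0 := range_eq_bot.mp (Submodule.finrank_eq_zero.mp hr)
    exact ⟨1, map_one _, by simp⟩
  · exact exists_det_eq_one_mul_eq_smul_mul_of_finrank_range_eq_one hV hsq hr hc
  · exact exists_det_eq_one_mul_eq_smul_mul_of_finrank_range_eq_two hV hsq hr hc

end LinearAlgebra

theorem Matrix.exists_specialLinearGroup_mul_eq_smul_mul_of_pow_three_eq_zero {F : Type*}
    [Field F] {Z : Matrix (Fin 4) (Fin 4) F} (hZ : Z ^ 3 = 0) {c : F} (hc : c ≠ 0) :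
    ∃ g : Matrix.SpecialLinearGroup (Fin 4) F,
      (g : Matrix (Fin 4) (Fin 4) F) * Z = c • (Z * g) := by
  obtain ⟨e, he, hfe⟩ := Module.End.exists_det_eq_one_mul_eq_smul_mul_of_pow_three_eq_zero
    (by simp) (by rw [← map_pow, hZ, map_zero] : Matrix.toLinAlgEquiv' Z ^ 3 = 0) hc
  refine ⟨⟨LinearMap.toMatrixAlgEquiv' e, ?_⟩, Matrix.toLinAlgEquiv'.injective ?_⟩
  · rw [← he, ← LinearMap.det_toLin']
    exact congrArg LinearMap.det (Matrix.toLinAlgEquiv'_toMatrixAlgEquiv' e)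
  · simpa using hfe

section TruncatedLog

variable {F A : Type*} [Field F] [Ring A] [Algebra F A] {y : A}

theorem sq_sub_inv_two_smul_sq (hy : y ^ 3 = 0) : (y - (2 : F)⁻¹ • y ^ 2) ^ 2 = y ^ 2 := by
  have hy₁₂ : y * y ^ 2 = 0 := by rw [← pow_succ', hy]
  have hy₂₁ : y ^ 2 * y = 0 := by rw [← pow_succ, hy]
  have hy₂₂ : y ^ 2 * y ^ 2 = 0 := by rw [← pow_add, pow_eq_zero_of_le (by norm_num) hy]
  rw [sq (y - _), sub_mul, mul_sub, mul_sub, smul_mul_assoc, mul_smul_comm, smul_mul_assoc,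
    mul_smul_comm, hy₁₂, hy₂₁, hy₂₂, ← sq]
  simp

theorem pow_three_sub_inv_two_smul_sq (hy : y ^ 3 = 0) : (y - (2 : F)⁻¹ • y ^ 2) ^ 3 = 0 := by
  have hy₂₁ : y ^ 2 * y = 0 := by rw [← pow_succ, hy]
  have hy₂₂ : y ^ 2 * y ^ 2 = 0 := by rw [← pow_add, pow_eq_zero_of_le (by norm_num) hy]
  rw [pow_succ, sq_sub_inv_two_smul_sq hy, mul_sub, mul_smul_comm, hy₂₁, hy₂₂, smul_zero,
    sub_zero]

theorem mul_one_add_eq_one_add_sq_mul (h2 : (2 : F) ≠ 0) (hy : y ^ 3 = 0) {g : A}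
    (hg : g * (y - (2 : F)⁻¹ • y ^ 2) = (2 : F) • ((y - (2 : F)⁻¹ • y ^ 2) * g)) :
    g * (1 + y) = (1 + y) ^ 2 * g := by
  set z := y - (2 : F)⁻¹ • y ^ 2 with hz
  have hz2 : z ^ 2 = y ^ 2 := sq_sub_inv_two_smul_sq hy
  have hy' : y = z + (2 : F)⁻¹ • z ^ 2 := by rw [hz2, hz, sub_add_cancel]
  have hgz2 : g * z ^ 2 = (2 * 2 : F) • (z ^ 2 * g) := by
    rw [sq, ← mul_assoc, hg, smul_mul_assoc, mul_assoc, hg, mul_smul_comm, smul_smul, ← mul_assoc,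
      ← sq]
  have hsq : (1 + y) ^ 2 = 1 + (2 : F) • z + (2 : F) • z ^ 2 := by
    rw [(Commute.one_left y).add_sq, one_pow, mul_one, two_mul, ← hz2, hy']
    match_scalars <;> field_simp <;> norm_num
  rw [hsq, hy', mul_add, mul_add, mul_one, mul_smul_comm, hgz2, hg, add_mul, add_mul, one_mul,
    smul_mul_assoc, smul_mul_assoc]
  match_scalars <;> field_simp

end TruncatedLog

theorem FiniteField.two_ne_zero_of_odd_card {F : Type*} [Field F] [Fintype F]
    (hF : Odd (Fintype.card F)) : (2 : F) ≠ 0 :=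
  Ring.two_ne_zero fun h => by
    have := FiniteField.even_card_iff_char_two.mp h
    rw [Nat.odd_iff] at hF
    omega

/-- Let `q` be a power of an odd prime and `u ∈ SL₄(F_q)` a non-regular
unipotent element, i.e. `(u - I)³ = 0`. Then `u` is conjugate in `SL₄(F_q)` to `u²`. -/
theorem SL4_nonregular_unipotent_conj_sq
    {F : Type} [Field F] [Fintype F]
    (hq : ∃ p k : ℕ, p.Prime ∧ Odd p ∧ 0 < k ∧ Fintype.card F = p ^ k)
    (u : Matrix.SpecialLinearGroup (Fin 4) F)
    (hu : ((u : Matrix (Fin 4) (Fin 4) F) - 1) ^ 3 = 0) :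
    ∃ g : Matrix.SpecialLinearGroup (Fin 4) F, g * u * g⁻¹ = u ^ 2 := by
  obtain ⟨p, k, -, hp, -, hcard⟩ := hq
  have h2 : (2 : F) ≠ 0 := FiniteField.two_ne_zero_of_odd_card (hcard ▸ hp.pow)
  obtain ⟨g, hg⟩ := Matrix.exists_specialLinearGroup_mul_eq_smul_mul_of_pow_three_eq_zero
    (pow_three_sub_inv_two_smul_sq (F := F) hu) h2
  refine ⟨g, mul_inv_eq_of_eq_mul (Subtype.ext ?_)⟩
  simpa using mul_one_add_eq_one_add_sq_mul h2 hu hg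
end

section
/- Let q be a power of an odd prime, let K be a finite field with q² elements, and let H be the subgroup of GL_2(K) consisting of all A with (det A)^{q+1} = 1. If A ∈ H satisfies (A − I)² = 0, then there exists g ∈ H with g A g⁻¹ = A². -/
/-!
Write `A = 1 + N` with `N ^ 2 = 0`, so that `A ^ 2 = 1 + 2 • N`. Since `q²` is a square, `2` is
a square `e ^ 2` in `K`. In a basis `(N v, v)` with `N v ≠ 0`, the matrix `g = diag(e, e⁻¹)`
satisfies `g N g⁻¹ = e ^ 2 • N = 2 • N`; it has determinant `1`, so it lies in `H` and conjugates
`A` to `A ^ 2`.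
-/

theorem FiniteField.isSquare_two_of_card_eq_sq {K : Type*} [Field K] [Fintype K] {q : ℕ}
    (hK : Fintype.card K = q ^ 2) : IsSquare (2 : K) := by
  rw [FiniteField.isSquare_two_iff, hK, Nat.pow_mod]
  have : q % 8 < 8 := Nat.mod_lt q (by norm_num)
  interval_cases q % 8 <;> decide

theorem Matrix.exists_det_eq_one_mul_eq_sq_smul_mul_of_sq_eq_zero {K : Type*} [Field K]
    {N : Matrix (Fin 2) (Fin 2) K} (hN : N ^ 2 = 0) {e : K} (he : e ≠ 0) :
    ∃ g : Matrix (Fin 2) (Fin 2) K, g.det = 1 ∧ g * N = e ^ 2 • (N * g) := by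
  rw [N.eta_fin_two] at hN ⊢
  set a := N 0 0
  set b := N 0 1
  set c := N 1 0
  set d := N 1 1
  simp only [sq, mul_fin_two, ← ext_iff, Fin.forall_fin_two, zero_apply, of_apply, cons_val',
    cons_val_zero, cons_val_one, empty_val', cons_val_fin_one] at hN
  obtain ⟨⟨haa, -⟩, hca, hdd⟩ := hN
  by_cases hc : c = 0
  · have ha : a = 0 := pow_eq_zero_iff two_ne_zero |>.mp (by simpa [hc, sq] using haa)
    have hd : d = 0 := pow_eq_zero_iff two_ne_zero |>.mp (by simpa [hc, sq] using hdd)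
    refine ⟨!![e, 0; 0, e⁻¹], by simp [det_fin_two_of, he], ?_⟩
    simp only [mul_fin_two, ← ext_iff, Fin.forall_fin_two, smul_apply, of_apply, cons_val',
      cons_val_zero, cons_val_one, empty_val', cons_val_fin_one, smul_eq_mul, ha, hc, hd]
    field_simp
    exact ⟨⟨by ring, by ring⟩, by ring, by ring⟩
  · have hd : d = -a := by
      have : c * (a + d) = 0 := by linear_combination hca
      linear_combination (mul_eq_zero.mp this).resolve_left hc
    -- `diag(e, e⁻¹)` written in the basis `(N e₀, e₀) = ((a, c), (1, 0))`
    refine ⟨!![e⁻¹, a * (e - e⁻¹) / c; 0, e], by simp [det_fin_two_of, he], ?_⟩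
    simp only [mul_fin_two, ← ext_iff, Fin.forall_fin_two, smul_apply, of_apply, cons_val',
      cons_val_zero, cons_val_one, empty_val', cons_val_fin_one, smul_eq_mul, hd]
    field_simp
    exact ⟨⟨by ring, by linear_combination (1 - e ^ 4) * haa⟩, by ring, by ring⟩

theorem mul_one_add_eq_one_add_sq_mul_s10 {R : Type*} [Ring R] {g n : R} (hn : n ^ 2 = 0)
    (h : g * n = n * g + n * g) : g * (1 + n) = (1 + n) ^ 2 * g := by
  rw [sq] at hn ⊢
  simp only [mul_add, add_mul, mul_one, one_mul, hn, h, add_zero]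
  abel

theorem twisted_levi_unipotent_conj_sq_general
    {q : ℕ} (hq : ∃ p k : ℕ, p.Prime ∧ Odd p ∧ 0 < k ∧ q = p ^ k)
    {K : Type} [Field K] [Fintype K] (hK : Fintype.card K = q ^ 2)
    (A : Matrix.GeneralLinearGroup (Fin 2) K)
    (hA : ((A : Matrix (Fin 2) (Fin 2) K) - 1) ^ 2 = 0) :
    ∃ g : Matrix.GeneralLinearGroup (Fin 2) K,
      (g : Matrix (Fin 2) (Fin 2) K).det ^ (q + 1) = 1 ∧ g * A * g⁻¹ = A ^ 2 := by
  obtain ⟨p, k, -, hp, -, rfl⟩ := hq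
  have h2 : (2 : K) ≠ 0 := Ring.two_ne_zero <| by
    rw [Ne, FiniteField.even_card_iff_char_two, hK, ← Nat.even_iff, Nat.not_even_iff_odd]
    exact hp.pow.pow
  obtain ⟨e, he⟩ := FiniteField.isSquare_two_of_card_eq_sq hK
  obtain ⟨g, hg, hgN⟩ := Matrix.exists_det_eq_one_mul_eq_sq_smul_mul_of_sq_eq_zero hA
    (e := e) fun h => h2 (by simpa [h] using he)
  rw [sq, ← he, two_smul] at hgN
  refine ⟨.mkOfDetNeZero g (by simp [hg]), by simp [hg], mul_inv_eq_iff_eq_mul.mpr (Units.ext ?_)⟩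
  simpa using mul_one_add_eq_one_add_sq_mul_s10 hA hgN

/-- Let `q` be a power of an odd prime, `K` a field with `q²` elements, and
`H = {A ∈ GL₂(K) : (det A)^(q+1) = 1}`. If `A ∈ H` satisfies `(A - I)² = 0`, then `A` is
conjugate in `H` to `A²`. -/
theorem twisted_levi_unipotent_conj_sq
    {q : ℕ} (hq : ∃ p k : ℕ, p.Prime ∧ Odd p ∧ 0 < k ∧ q = p ^ k)
    {K : Type} [Field K] [Fintype K] (hK : Fintype.card K = q ^ 2)
    (A : Matrix.GeneralLinearGroup (Fin 2) K)
    (hdet : (A : Matrix (Fin 2) (Fin 2) K).det ^ (q + 1) = 1)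
    (hA : ((A : Matrix (Fin 2) (Fin 2) K) - 1) ^ 2 = 0) :
    ∃ g : Matrix.GeneralLinearGroup (Fin 2) K,
      (g : Matrix (Fin 2) (Fin 2) K).det ^ (q + 1) = 1 ∧ g * A * g⁻¹ = A ^ 2 :=
  twisted_levi_unipotent_conj_sq_general hq hK A hA
end

section
/- Let p be an odd prime, q a power of p, and let g ∈ SL_n(F_q) be a semisimple element, i.e., an element whose order is coprime to p. Then the SL_n(F_q)-conjugacy class of g is invariant under conjugation by GL_n(F_q): for every x ∈ GL_n(F_q) there exists h ∈ SL_n(F_q) with x g x⁻¹ = h g h⁻¹. -/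
/-!
An element `g` of order prime to `p` is semisimple, so `F_q^n`, made an `F_q[X]`-module through
`g`, has a simple direct summand `F_q[X] ⧸ I ≅ F_{q^d}`. Acting on that summand by an element of
`F_{q^d}` whose norm is `det x`, and trivially on a complement, gives `u` commuting with `g` with
`det u = det x` (the norm of a finite field extension is surjective). Then `h = x u⁻¹` lies in
`SL_n(F_q)` and conjugates `g` as `x` does.
-/

open Polynomial Module

theorem IsSemisimpleModule.exists_linearEquiv_quotient_prod {R M : Type*} [Ring R]
    [AddCommGroup M] [Module R M] [IsSemisimpleModule R M] [Nontrivial M] :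
    ∃ (I : Ideal R) (N : Submodule R M), I.IsMaximal ∧ Nonempty (M ≃ₗ[R] (R ⧸ I) × N) := by
  obtain ⟨S, hS⟩ := IsSemisimpleModule.exists_simple_submodule R M
  obtain ⟨N, hSN⟩ := exists_isCompl S
  obtain ⟨I, hI, ⟨e⟩⟩ := isSimpleModule_iff_quot_maximal.mp hS
  exact ⟨I, N, hI,
    ⟨(Submodule.prodEquivOfIsCompl S N hSN).symm ≪≫ₗ e.prodCongr (LinearEquiv.refl R N)⟩⟩

theorem Module.AEval'.commute_conj_restrictScalars {R M : Type*} [CommSemiring R]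
    [AddCommMonoid M] [Module R M] (f : End R M) (z : AEval' f →ₗ[R[X]] AEval' f) :
    Commute f ((AEval'.of f).symm.conj (z.restrictScalars R)) := by
  ext v
  simp only [Module.End.mul_apply, LinearEquiv.conj_apply_apply, LinearEquiv.symm_symm,
    LinearMap.restrictScalars_apply, ← AEval'.X_smul_of, map_smul, AEval'.of_symm_X_smul]

theorem LinearMap.det_restrictScalars_conj_prodMap_lmul {F A B M N : Type*} [Field F]
    [CommRing A] [CommRing B] [Algebra F A] [Algebra A B] [Algebra F B] [IsScalarTower F A B]
    [AddCommGroup M] [Module F M] [Module A M] [IsScalarTower F A M]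
    [AddCommGroup N] [Module F N] [Module A N] [IsScalarTower F A N]
    [Module.Finite F B] [Module.Finite F N] (e : M ≃ₗ[A] B × N) (b : B) :
    ((e.symm.conj ((Algebra.lmul A B b).prodMap LinearMap.id)).restrictScalars F).det =
      Algebra.norm F b := by
  have hconj : (e.symm.conj ((Algebra.lmul A B b).prodMap LinearMap.id)).restrictScalars F
      = (e.restrictScalars F).symm.conj ((Algebra.lmul F B b).prodMap LinearMap.id) := rfl
  rw [hconj, LinearEquiv.conj_apply, LinearMap.comp_assoc, LinearMap.det_conj,
    LinearMap.det_prodMap, LinearMap.det_id, mul_one, Algebra.norm_apply]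

theorem Module.End.IsSemisimple.exists_commute_det_eq {F V : Type*} [Field F] [Finite F]
    [AddCommGroup V] [Module F V] [FiniteDimensional F V] [Nontrivial V] {f : End F V}
    (hf : f.IsSemisimple) (c : F) : ∃ z : End F V, Commute f z ∧ z.det = c := by
  have : IsSemisimpleModule F[X] (AEval' f) := hf
  have : Nontrivial (AEval' f) := (AEval'.of f).injective.nontrivial
  obtain ⟨I, N, hI, ⟨e⟩⟩ :=
    IsSemisimpleModule.exists_linearEquiv_quotient_prod (R := F[X]) (M := AEval' f)
  have : Module.Finite F (F[X] ⧸ I) :=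
    .of_surjective ((LinearMap.fst F _ _) ∘ₗ e.toLinearMap.restrictScalars F)
      (Prod.fst_surjective.comp e.surjective)
  have : Module.Finite F N :=
    .of_surjective ((LinearMap.snd F _ _) ∘ₗ e.toLinearMap.restrictScalars F)
      (Prod.snd_surjective.comp e.surjective)
  let := Ideal.Quotient.field I
  have : Finite (F[X] ⧸ I) := Module.finite_of_finite F
  obtain ⟨a, rfl⟩ := FiniteField.norm_surjective F (F[X] ⧸ I) c
  let z := e.symm.conj ((Algebra.lmul F[X] (F[X] ⧸ I) a).prodMap LinearMap.id)
  refine ⟨(AEval'.of f).symm.conj (z.restrictScalars F),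
    AEval'.commute_conj_restrictScalars f z, ?_⟩
  rw [LinearEquiv.conj_apply, LinearMap.comp_assoc, LinearMap.det_conj,
    LinearMap.det_restrictScalars_conj_prodMap_lmul]

theorem Module.End.isSemisimple_of_pow_eq_one {K V : Type*} [Field K] [AddCommGroup V]
    [Module K V] [FiniteDimensional K V] {f : End K V} {m : ℕ} (hf : f ^ m = 1)
    (hm : (m : K) ≠ 0) : f.IsSemisimple :=
  isSemisimple_of_squarefree_aeval_eq_zero (X_pow_sub_one_separable_iff.mpr hm).squarefree
    (by simp [hf])

theorem Matrix.GeneralLinearGroup.exists_commute_det_eq {n F : Type*} [Fintype n]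
    [DecidableEq n] [Nonempty n] [Field F] [Finite F] (g : GL n F) (hg : (orderOf g : F) ≠ 0)
    (c : Fˣ) : ∃ u : GL n F, Commute u g ∧ det u = c := by
  let f := Matrix.toLinAlgEquiv' (g : Matrix n n F)
  have hf : f ^ orderOf g = 1 := by
    rw [← map_pow, ← Units.val_pow_eq_pow_val, pow_orderOf_eq_one, Units.val_one, map_one]
  obtain ⟨z, hfz, hz⟩ := (Module.End.isSemisimple_of_pow_eq_one hf hg).exists_commute_det_eq c
  have hZ : (LinearMap.toMatrixAlgEquiv' z).det = c := (LinearMap.det_toMatrix' z).trans hz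
  refine ⟨mkOfDetNeZero _ (hZ ▸ c.ne_zero), Units.ext ?_, Units.ext hZ⟩
  simpa [f] using (hfz.map LinearMap.toMatrixAlgEquiv').symm.eq

theorem semisimple_SL_class_GL_invariant_general
    {F : Type} [Field F] [Fintype F] {p q k n : ℕ}
    (hp : p.Prime) (hq : q = p ^ k)
    (hcard : Fintype.card F = q)
    (g : Matrix.GeneralLinearGroup (Fin n) F)
    (hss : Nat.Coprime (orderOf g) p) :
    ∀ x : Matrix.GeneralLinearGroup (Fin n) F,
      ∃ h ∈ (Matrix.GeneralLinearGroup.det :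
        Matrix.GeneralLinearGroup (Fin n) F →* Fˣ).ker,
        x * g * x⁻¹ = h * g * h⁻¹ := by
  intro x
  rcases isEmpty_or_nonempty (Fin n) with _ | _
  · exact ⟨1, one_mem _, Subsingleton.elim _ _⟩
  have : Fact p.Prime := ⟨hp⟩
  have : CharP F p := charP_of_card_eq_prime_pow (hcard.trans hq)
  have hg : (orderOf g : F) ≠ 0 := by
    rwa [Ne, CharP.cast_eq_zero_iff F p, ← hp.coprime_iff_not_dvd, Nat.coprime_comm]
  obtain ⟨u, hug, hu⟩ := Matrix.GeneralLinearGroup.exists_commute_det_eq g hg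
    (Matrix.GeneralLinearGroup.det x)
  refine ⟨x * u⁻¹, by simp [hu], ?_⟩
  calc x * g * x⁻¹ = x * u⁻¹ * (u * g) * x⁻¹ := by group
    _ = x * u⁻¹ * g * (x * u⁻¹)⁻¹ := by rw [hug.eq]; group

/-- Let `p` be an odd prime, `q` a power of `p`, and `g ∈ SL n (F_q)` a
semisimple element (its order is coprime to `p`). Then the `SL n (F_q)`-conjugacy class of
`g` is invariant under conjugation by `GL n (F_q)`. Here `SL n (F_q)` is realized as the
kernel of the determinant on `GL n (F_q)`. -/
theorem semisimple_SL_class_GL_invariant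
    {F : Type} [Field F] [Fintype F] {p q k n : ℕ}
    (hp : p.Prime) (hpodd : Odd p) (hk : 0 < k) (hq : q = p ^ k)
    (hcard : Fintype.card F = q)
    (g : Matrix.GeneralLinearGroup (Fin n) F)
    (hgSL : g ∈ (Matrix.GeneralLinearGroup.det :
      Matrix.GeneralLinearGroup (Fin n) F →* Fˣ).ker)
    (hss : Nat.Coprime (orderOf g) p) :
    ∀ x : Matrix.GeneralLinearGroup (Fin n) F,
      ∃ h ∈ (Matrix.GeneralLinearGroup.det :
        Matrix.GeneralLinearGroup (Fin n) F →* Fˣ).ker,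
        x * g * x⁻¹ = h * g * h⁻¹ :=
  semisimple_SL_class_GL_invariant_general hp hq hcard g hss
end
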